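/- Let G be a finite p-group and k a field of characteristic p. Then the center of the augmentation ideal satisfies Z(I(G)) = I(Z(G)) ⊕ ([kG, kG] ∩ Z(kG)) as k-vector spaces. -/

import Mathlib

/-- The augmentation map of a group algebra. -/
noncomputable def augmentation (k G : Type*) [CommSemiring k] [Group G] :
    MonoidAlgebra k G →ₐ[k] k :=
  MonoidAlgebra.lift k k G 1

/-- The `k`-span of all Lie commutators `a*b - b*a` in a `k`-algebra `A`. -/
def commutatorSubmodule (k A : Type*) [CommSemiring k] [Ring A] [Algebra k A] :
    Submodule k A :=
  Submodule.span k {x : A | ∃ a b : A, x = a * b - b * a}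

section Aux

variable (k : Type*) [Field k] (G : Type*) [Group G]

lemma StmtNine.aug_apply (f : MonoidAlgebra k G) :
    augmentation k G f = f.coeff.sum fun _ b => b := by
  rw [augmentation, MonoidAlgebra.lift_apply]
  simp

lemma StmtNine.aug_of (g : G) : augmentation k G (MonoidAlgebra.of k G g) = 1 := by
  simp [augmentation]

lemma StmtNine.of_sub_conj_mem (q g : G) :
    MonoidAlgebra.of k G g - MonoidAlgebra.of k G (q * g * q⁻¹)
      ∈ commutatorSubmodule k (MonoidAlgebra k G) := by
  have : MonoidAlgebra.of k G g - MonoidAlgebra.of k G (q * g * q⁻¹)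
      = MonoidAlgebra.of k G (g * q⁻¹) * MonoidAlgebra.of k G q
        - MonoidAlgebra.of k G q * MonoidAlgebra.of k G (g * q⁻¹) := by
    rw [← map_mul, ← map_mul]; group
  rw [this]
  exact Submodule.subset_span ⟨_, _, rfl⟩

lemma StmtNine.of_central_mem_center {z : G} (hz : z ∈ Subgroup.center G) :
    MonoidAlgebra.of k G z ∈ Subalgebra.center k (MonoidAlgebra k G) := by
  rw [Subalgebra.mem_center_iff]
  intro b
  ext y
  rw [MonoidAlgebra.of_apply, MonoidAlgebra.coeff_single_mul_apply, MonoidAlgebra.coeff_mul_single_apply]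
  rw [Subgroup.mem_center_iff] at hz
  have : z⁻¹ * y = y * z⁻¹ := by
    have := hz y⁻¹
    calc z⁻¹ * y = (y⁻¹ * z)⁻¹ := by group
    _ = (z * y⁻¹)⁻¹ := by rw [hz]
    _ = y * z⁻¹ := by group
  rw [this, mul_comm]

lemma StmtNine.coeff_conj {w : MonoidAlgebra k G}
    (hw : w ∈ Subalgebra.center k (MonoidAlgebra k G)) (q g : G) :
    w.coeff (q * g * q⁻¹) = w.coeff g := by
  rw [Subalgebra.mem_center_iff] at hw
  have h := hw (MonoidAlgebra.of k G q)
  have h2 := congrArg (fun f : MonoidAlgebra k G => f.coeff (q * g)) h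
  simp only [MonoidAlgebra.of_apply, MonoidAlgebra.coeff_single_mul_apply,
    MonoidAlgebra.coeff_mul_single_apply, one_mul, mul_one] at h2
  rw [← h2]
  congr 1
  group

/-- An element supported on the center of `G` is central in `kG`. -/
lemma StmtNine.supported_center_mem {f : MonoidAlgebra k G}
    (h : ∀ g ∈ f.coeff.support, g ∈ Subgroup.center G) :
    f ∈ Subalgebra.toSubmodule (Subalgebra.center k (MonoidAlgebra k G)) := by
  classical
  have hf : f = ∑ g ∈ f.coeff.support, f.coeff g • MonoidAlgebra.of k G g := by
    conv_lhs => rw [← MonoidAlgebra.sum_coeff_single f]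
    rw [Finsupp.sum]
    refine Finset.sum_congr rfl fun g _ => ?_
    rw [MonoidAlgebra.of_apply, MonoidAlgebra.smul_single', mul_one]
  rw [hf]
  exact Submodule.sum_mem _ fun g hg =>
    Submodule.smul_mem _ _ (StmtNine.of_central_mem_center k G (h g hg))

/-- The coefficient functional at a central group element kills commutators. -/
lemma StmtNine.comm_coeff_zero {z : G} (hz : z ∈ Subgroup.center G)
    {x : MonoidAlgebra k G} (hx : x ∈ commutatorSubmodule k (MonoidAlgebra k G)) :
    x.coeff z = 0 := by
  classical
  have : commutatorSubmodule k (MonoidAlgebra k G) ≤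
      LinearMap.ker ((Finsupp.lapply (M := k) (R := k) z).comp
        (MonoidAlgebra.coeffLinearEquiv k).toLinearMap) := by
    rw [commutatorSubmodule, Submodule.span_le]
    rintro _ ⟨a, b, rfl⟩
    simp only [SetLike.mem_coe, LinearMap.mem_ker]
    show (a * b - b * a).coeff z = 0
    rw [MonoidAlgebra.coeff_sub, Finsupp.sub_apply, MonoidAlgebra.coeff_mul, MonoidAlgebra.coeff_mul]
    rw [sub_eq_zero]
    simp only [Finsupp.sum]
    conv_rhs => rw [Finset.sum_comm]
    refine Finset.sum_congr rfl fun u hu => Finset.sum_congr rfl fun v hv => ?_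
    have hiff : u * v = z ↔ v * u = z := by
      rw [Subgroup.mem_center_iff] at hz
      constructor <;> intro h
      · calc v * u = u⁻¹ * (u * v) * u := by group
        _ = z := by rw [h, hz u⁻¹, mul_assoc, inv_mul_cancel, mul_one]
      · calc u * v = v⁻¹ * (v * u) * v := by group
        _ = z := by rw [h, hz v⁻¹, mul_assoc, inv_mul_cancel, mul_one]
    simp only [hiff]
    split <;> [exact mul_comm _ _; rfl]
  exact this hx

lemma StmtNine.span_supported :
    Submodule.span k {x : MonoidAlgebra k G |
        ∃ z ∈ Subgroup.center G, x = MonoidAlgebra.of k G z - 1} ≤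
      MonoidAlgebra.supported k k ((Subgroup.center G : Set G)) := by
  classical
  rw [Submodule.span_le]
  rintro _ ⟨z, hz, rfl⟩
  rw [SetLike.mem_coe, MonoidAlgebra.mem_supported]
  intro g hg
  have : g ∈ (MonoidAlgebra.of k G z).coeff.support ∪ (1 : MonoidAlgebra k G).coeff.support :=
    Finsupp.support_sub hg
  rcases Finset.mem_union.mp this with h | h
  · have : g = z := Finset.mem_singleton.mp (Finsupp.support_single_subset h)
    exact this ▸ hz
  · have : g = 1 := Finset.mem_singleton.mp (Finsupp.support_single_subset h)
    exact this ▸ Subgroup.one_mem _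
end Aux

section KeyLemma

lemma StmtNine.lemL (k : Type*) [Field k] (p : ℕ) [Fact p.Prime] [CharP k p]
    (G : Type*) [Group G] [Finite G] (hG : IsPGroup p G)
    (w : MonoidAlgebra k G) (hw : w ∈ Subalgebra.center k (MonoidAlgebra k G))
    (hs : ∀ g ∈ w.coeff.support, g ∉ Subgroup.center G) :
    w ∈ commutatorSubmodule k (MonoidAlgebra k G) := by
  classical
  have : Fintype G := Fintype.ofFinite G
  set r : G → G := fun g => (ConjClasses.mk g).out with hr_def
  have hr : ∀ g, IsConj g (r g) := fun g => by
    rw [← ConjClasses.mk_eq_mk_iff_isConj, hr_def]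
    exact (Quotient.out_eq _).symm
  have hrinj : ∀ g g', r g = r g' → IsConj g g' := by
    intro g g' h
    rw [← ConjClasses.mk_eq_mk_iff_isConj]
    exact Quotient.out_injective h
  have hcc : ∀ g g', IsConj g g' → w.coeff g = w.coeff g' := by
    intro g g' hconj
    rw [isConj_iff] at hconj
    obtain ⟨q, rfl⟩ := hconj
    exact (StmtNine.coeff_conj k G hw q g).symm
  set u : MonoidAlgebra k G :=
    ∑ g ∈ w.coeff.support, w.coeff g • (MonoidAlgebra.of k G g - MonoidAlgebra.of k G (r g)) with hu_def
  have hu : u ∈ commutatorSubmodule k (MonoidAlgebra k G) := by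
    refine Submodule.sum_mem _ fun g hg => Submodule.smul_mem _ _ ?_
    obtain ⟨q, hq⟩ := isConj_iff.mp (hr g)
    rw [← hq]
    exact StmtNine.of_sub_conj_mem k G q g
  have hwu : w = u := by
    have h1 : w = ∑ g ∈ w.coeff.support, w.coeff g • MonoidAlgebra.of k G g := by
      conv_lhs => rw [← MonoidAlgebra.sum_coeff_single w]
      rw [Finsupp.sum]
      refine Finset.sum_congr rfl fun g _ => ?_
      rw [MonoidAlgebra.of_apply, MonoidAlgebra.smul_single', mul_one]
    have h2 : (∑ g ∈ w.coeff.support, w.coeff g • MonoidAlgebra.of k G (r g)) = 0 := by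
      ext c
      rw [MonoidAlgebra.coeff_sum, Finset.sum_apply']
      simp only [MonoidAlgebra.of_apply, MonoidAlgebra.smul_single', mul_one,
        MonoidAlgebra.coeff_single, Finsupp.single_apply, MonoidAlgebra.coeff_zero,
        Finsupp.coe_zero, Pi.zero_apply]
      rw [← Finset.sum_filter]
      set S := w.coeff.support.filter (fun g => r g = c) with hS
      rcases S.eq_empty_or_nonempty with hSe | ⟨g₀, hg₀⟩
      · rw [hSe, Finset.sum_empty]
      · have hg₀s : g₀ ∈ w.coeff.support := (Finset.mem_filter.mp hg₀).1
        have hg₀r : r g₀ = c := (Finset.mem_filter.mp hg₀).2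
        set C : Finset G := (MulAction.orbit (ConjAct G) g₀).toFinset with hC
        have hmemC : ∀ g, g ∈ C ↔ IsConj g g₀ := by
          intro g
          rw [hC, Set.mem_toFinset, ConjAct.mem_orbit_conjAct]
        have hSC : S = C := by
          ext g
          rw [hmemC, hS, Finset.mem_filter]
          constructor
          · rintro ⟨hgs, hgr⟩
            exact hrinj g g₀ (hgr.trans hg₀r.symm)
          · intro hconj
            have hwg : w.coeff g = w.coeff g₀ := hcc g g₀ hconj
            refine ⟨?_, ?_⟩
            · rw [Finsupp.mem_support_iff, hwg]
              exact Finsupp.mem_support_iff.mp hg₀s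
            · rw [← hg₀r]
              show (ConjClasses.mk g).out = (ConjClasses.mk g₀).out
              rw [ConjClasses.mk_eq_mk_iff_isConj.mpr hconj]
        have hconst : ∑ g ∈ S, w.coeff g = (C.card : k) * w.coeff g₀ := by
          rw [hSC]
          rw [Finset.sum_congr rfl (fun g hg => hcc g g₀ ((hmemC g).mp hg))]
          rw [Finset.sum_const, nsmul_eq_mul]
        rw [hconst]
        have hdvd : C.card ∣ Fintype.card G := by
          have horb : C.card = Fintype.card (MulAction.orbit (ConjAct G) g₀) := by
            rw [hC, Set.toFinset_card]
          have := MulAction.card_orbit_mul_card_stabilizer_eq_card_group (ConjAct G) g₀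
          have hcards : Fintype.card (ConjAct G) = Fintype.card G :=
            Fintype.card_congr ConjAct.ofConjAct.toEquiv
          rw [hcards] at this
          exact ⟨_, by rw [horb, ← this]⟩
        have hne1 : C.card ≠ 1 := by
          intro h1
          obtain ⟨a, ha⟩ := Finset.card_eq_one.mp h1
          have hg₀C : g₀ ∈ C := (hmemC g₀).mpr (IsConj.refl g₀)
          rw [ha, Finset.mem_singleton] at hg₀C
          subst hg₀C
          refine hs g₀ hg₀s (Subgroup.mem_center_iff.mpr fun h => ?_)
          have : h * g₀ * h⁻¹ ∈ C := (hmemC _).mpr (isConj_iff.mpr ⟨h⁻¹, by group⟩)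
          rw [ha, Finset.mem_singleton] at this
          calc h * g₀ = (h * g₀ * h⁻¹) * h := by group
          _ = g₀ * h := by rw [this]
        have hp : p ∣ C.card := by
          obtain ⟨n, hn⟩ := IsPGroup.iff_card.mp hG
          rw [Nat.card_eq_fintype_card] at hn
          rw [hn] at hdvd
          obtain ⟨m, hm, hmeq⟩ := (Nat.dvd_prime_pow (Fact.out : p.Prime)).mp hdvd
          rcases Nat.eq_zero_or_pos m with rfl | hmpos
          · simp at hmeq; exact absurd hmeq hne1
          · exact hmeq ▸ dvd_pow_self p hmpos.ne'
        rw [(CharP.cast_eq_zero_iff k p C.card).mpr hp, zero_mul]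
    calc w = ∑ g ∈ w.coeff.support, w.coeff g • MonoidAlgebra.of k G g := h1
    _ = u + ∑ g ∈ w.coeff.support, w.coeff g • MonoidAlgebra.of k G (r g) := by
        rw [hu_def, ← Finset.sum_add_distrib]
        refine Finset.sum_congr rfl fun g _ => ?_
        rw [← smul_add, sub_add_cancel]
    _ = u := by rw [h2, add_zero]
  rw [hwu]; exact hu

end KeyLemma

/-- For a finite `p`-group `G` and a field `k` of characteristic `p`,
`Z(I(G)) = I(Z(G)) ⊕ ([kG, kG] ∩ Z(kG))` as `k`-vector spaces, where
`Z(I(G)) = I(G) ∩ Z(kG)` and `I(Z(G))` is the span of `z - 1`, `z ∈ Z(G)`. -/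
theorem stmt9 (k : Type*) [Field k] (p : ℕ) [Fact p.Prime] [CharP k p]
    (G : Type*) [Group G] [Finite G] (hG : IsPGroup p G) :
    Disjoint
      (Submodule.span k {x : MonoidAlgebra k G |
        ∃ z ∈ Subgroup.center G, x = MonoidAlgebra.of k G z - 1})
      (commutatorSubmodule k (MonoidAlgebra k G) ⊓
        Subalgebra.toSubmodule (Subalgebra.center k (MonoidAlgebra k G))) ∧
    Submodule.span k {x : MonoidAlgebra k G |
        ∃ z ∈ Subgroup.center G, x = MonoidAlgebra.of k G z - 1} ⊔
      (commutatorSubmodule k (MonoidAlgebra k G) ⊓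
        Subalgebra.toSubmodule (Subalgebra.center k (MonoidAlgebra k G))) =
      (RingHom.ker (augmentation k G)).restrictScalars k ⊓
        Subalgebra.toSubmodule (Subalgebra.center k (MonoidAlgebra k G)) := by
  classical
  have hcommker : commutatorSubmodule k (MonoidAlgebra k G) ≤
      (RingHom.ker (augmentation k G)).restrictScalars k := by
    rw [commutatorSubmodule, Submodule.span_le]
    rintro _ ⟨a, b, rfl⟩
    simp only [SetLike.mem_coe, Submodule.restrictScalars_mem, RingHom.mem_ker]
    rw [map_sub, map_mul, map_mul, mul_comm, sub_self]
  constructor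
  · -- disjointness
    rw [Submodule.disjoint_def]
    intro x hx1 hx2
    have hxc : x ∈ commutatorSubmodule k (MonoidAlgebra k G) :=
      (Submodule.mem_inf.mp hx2).1
    have hxs := StmtNine.span_supported k G hx1
    rw [MonoidAlgebra.mem_supported] at hxs
    ext g
    by_cases hg : g ∈ Subgroup.center G
    · exact StmtNine.comm_coeff_zero k G hg hxc
    · exact Finsupp.notMem_support_iff.mp (fun hmem => hg (hxs hmem))
  · apply le_antisymm
    · refine sup_le ?_ ?_
      · rw [Submodule.span_le]
        rintro _ ⟨z, hz, rfl⟩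
        refine Submodule.mem_inf.mpr ⟨?_, ?_⟩
        · simp only [SetLike.mem_coe, Submodule.restrictScalars_mem, RingHom.mem_ker]
          rw [map_sub, map_one, StmtNine.aug_of, sub_self]
        · exact Submodule.sub_mem _ (StmtNine.of_central_mem_center k G hz)
            (Subalgebra.one_mem _)
      · exact inf_le_inf_right _ hcommker
    · -- hard direction
      intro x hx
      obtain ⟨hx1, hx2⟩ := Submodule.mem_inf.mp hx
      rw [Submodule.restrictScalars_mem, RingHom.mem_ker] at hx1
      set y : MonoidAlgebra k G := .ofCoeff (Finsupp.filter (fun g => g ∈ Subgroup.center G) x.coeff) with hy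
      set w : MonoidAlgebra k G := .ofCoeff (Finsupp.filter (fun g => g ∉ Subgroup.center G) x.coeff) with hw
      have hxyw : y + w = x :=
        MonoidAlgebra.coeff_injective (Finsupp.filter_pos_add_filter_neg x.coeff _)
      have hysupp : ∀ g ∈ y.coeff.support, g ∈ Subgroup.center G := by
        intro g hg
        rw [hy, MonoidAlgebra.coeff_ofCoeff, Finsupp.support_filter, Finset.mem_filter] at hg
        exact hg.2
      have hwsupp : ∀ g ∈ w.coeff.support, g ∉ Subgroup.center G := by
        intro g hg
        rw [hw, MonoidAlgebra.coeff_ofCoeff, Finsupp.support_filter, Finset.mem_filter] at hg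
        exact hg.2
      have hycen : y ∈ Subalgebra.toSubmodule (Subalgebra.center k (MonoidAlgebra k G)) :=
        StmtNine.supported_center_mem k G hysupp
      have hwcen : w ∈ Subalgebra.toSubmodule (Subalgebra.center k (MonoidAlgebra k G)) := by
        have : w = x - y := by rw [← hxyw, add_sub_cancel_left]
        rw [this]
        exact Submodule.sub_mem _ hx2 hycen
      have hwcomm : w ∈ commutatorSubmodule k (MonoidAlgebra k G) :=
        StmtNine.lemL k p G hG w hwcen hwsupp
      have haugw : augmentation k G w = 0 := hcommker hwcomm
      have haugy : augmentation k G y = 0 := by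
        have := congrArg (augmentation k G) hxyw
        rw [map_add, haugw, add_zero, hx1] at this
        exact this
      have hyspan : y ∈ Submodule.span k {x : MonoidAlgebra k G |
          ∃ z ∈ Subgroup.center G, x = MonoidAlgebra.of k G z - 1} := by
        have hy2 : y = ∑ z ∈ y.coeff.support, y.coeff z • (MonoidAlgebra.of k G z - 1) := by
          have h1 : y = ∑ z ∈ y.coeff.support, y.coeff z • MonoidAlgebra.of k G z := by
            conv_lhs => rw [← MonoidAlgebra.sum_coeff_single y]
            rw [Finsupp.sum]
            refine Finset.sum_congr rfl fun g _ => ?_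
            rw [MonoidAlgebra.of_apply, MonoidAlgebra.smul_single', mul_one]
          have h2 : (∑ z ∈ y.coeff.support, y.coeff z) = 0 := by
            rw [← haugy, StmtNine.aug_apply, Finsupp.sum]
          calc y = ∑ z ∈ y.coeff.support, y.coeff z • MonoidAlgebra.of k G z := h1
          _ = (∑ z ∈ y.coeff.support, y.coeff z • (MonoidAlgebra.of k G z - 1))
              + (∑ z ∈ y.coeff.support, y.coeff z) • (1 : MonoidAlgebra k G) := by
              rw [Finset.sum_smul, ← Finset.sum_add_distrib]
              refine Finset.sum_congr rfl fun g _ => ?_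
              rw [← smul_add, sub_add_cancel]
          _ = ∑ z ∈ y.coeff.support, y.coeff z • (MonoidAlgebra.of k G z - 1) := by
              rw [h2, zero_smul, add_zero]
        rw [hy2]
        exact Submodule.sum_mem _ fun z hz => Submodule.smul_mem _ _
          (Submodule.subset_span ⟨z, hysupp z hz, rfl⟩)
      rw [← hxyw]
      exact Submodule.add_mem_sup hyspan (Submodule.mem_inf.mpr ⟨hwcomm, hwcen⟩)
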